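/- Let m ∈ su(2^n) and let u = Σ_j γ_j b_j where b_1,...,b_m are commuting linearly independent Pauli strings and γ_1, ..., γ_m are rationally independent real numbers. If [m, u] = 0, then [m, b_j] = 0 for every j, and hence m commutes with every element of the multiplicative closure M(b) of span{b_j}. -/

import Mathlib

open Matrix

noncomputable def pauli : Fin 4 → Matrix (Fin 2) (Fin 2) ℂ
  | 0 => 1
  | 1 => !![0, 1; 1, 0]
  | 2 => !![0, -Complex.I; Complex.I, 0]
  | 3 => !![1, 0; 0, -1]

noncomputable def PauliString (n : ℕ) (f : Fin n → Fin 4) :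
    Matrix (Fin n → Fin 2) (Fin n → Fin 2) ℂ :=
  fun v w => ∏ i, pauli (f i) (v i) (w i)

/-- The multiplicative closure `M(b)` of a commuting family `b`. -/
noncomputable def multClosure {N : Type*} [Fintype N] [DecidableEq N]
    (m : ℕ) (b : Fin m → Matrix N N ℂ) : Submodule ℂ (Matrix N N ℂ) :=
  Submodule.span ℂ
    {P | ∃ s : Finset (Fin m),
      P = (((List.finRange m).filter (· ∈ s)).map b).prod}

lemma pauli_mul_self (a : Fin 4) : pauli a * pauli a = 1 := by
  fin_cases a <;>
  · ext i j
    fin_cases i <;> fin_cases j <;>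
      simp [pauli, Matrix.mul_apply, Fin.sum_univ_two, Matrix.one_apply, Complex.I_mul_I]

lemma pauliString_mul_self (n : ℕ) (f : Fin n → Fin 4) :
    PauliString n f * PauliString n f = 1 := by
  ext v w
  rw [Matrix.mul_apply]
  calc ∑ u : Fin n → Fin 2, PauliString n f v u * PauliString n f u w
      = ∑ u : Fin n → Fin 2, ∏ i, (pauli (f i) (v i) (u i) * pauli (f i) (u i) (w i)) := by
        simp [PauliString, Finset.prod_mul_distrib]
    _ = ∏ i, ∑ a : Fin 2, pauli (f i) (v i) a * pauli (f i) a (w i) := by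
        rw [Finset.prod_univ_sum]
        simp [Fintype.piFinset_univ]
    _ = ∏ i, (1 : Matrix (Fin 2) (Fin 2) ℂ) (v i) (w i) := by
        simp_rw [← Matrix.mul_apply, pauli_mul_self]
    _ = (1 : Matrix (Fin n → Fin 2) (Fin n → Fin 2) ℂ) v w := by
        by_cases h : v = w
        · simp [h, Matrix.one_apply]
        · obtain ⟨i, hi⟩ : ∃ i, v i ≠ w i := by
            by_contra hc; push_neg at hc; exact h (funext hc)
          rw [Finset.prod_eq_zero (Finset.mem_univ i) (by simp [Matrix.one_apply, hi])]
          simp [Matrix.one_apply, h]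

lemma adjoin_comm {N : Type*} [Fintype N] [DecidableEq N] {m : ℕ}
    (b : Fin m → Matrix N N ℂ)
    (hbb : ∀ i j, b i * b j = b j * b i) :
    ∀ x ∈ Algebra.adjoin ℂ (Set.range b), ∀ y ∈ Algebra.adjoin ℂ (Set.range b),
      x * y = y * x := by
  have h1 : Algebra.adjoin ℂ (Set.range b) ≤ Subalgebra.centralizer ℂ (Set.range b) := by
    apply Algebra.adjoin_le
    rintro x ⟨i, rfl⟩
    rw [SetLike.mem_coe, Subalgebra.mem_centralizer_iff]
    rintro g ⟨j, rfl⟩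
    exact hbb j i
  have h2 : Algebra.adjoin ℂ (Set.range b) ≤
      Subalgebra.centralizer ℂ (Algebra.adjoin ℂ (Set.range b) : Set _) := by
    apply Algebra.adjoin_le
    rintro x ⟨i, rfl⟩
    rw [SetLike.mem_coe, Subalgebra.mem_centralizer_iff]
    intro g hg
    exact ((Subalgebra.mem_centralizer_iff ℂ).mp (h1 hg) (b i) ⟨i, rfl⟩).symm
  intro x hx y hy
  exact (Subalgebra.mem_centralizer_iff ℂ).mp (h2 hy) x hx

set_option maxHeartbeats 1000000 in
set_option synthInstance.maxHeartbeats 400000 in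
/-- **Theorem A1.**  If `u = Σ γⱼ bⱼ` with `bⱼ` commuting, linearly independent
Pauli strings and `γⱼ` rationally independent reals, then `[A, u] = 0` implies
`[A, bⱼ] = 0` for every `j`, and hence `A` commutes with every element of the
multiplicative closure `M(b)`. -/
theorem commutes_with_each_b_of_commutes_with_u
    (n m : ℕ) (b : Fin m → Matrix (Fin n → Fin 2) (Fin n → Fin 2) ℂ)
    (hPauli : ∀ j, ∃ f : Fin n → Fin 4, b j = PauliString n f)
    (hcomm : ∀ i j, ⁅b i, b j⁆ = 0)
    (hind : LinearIndependent ℂ b)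
    (γ : Fin m → ℝ)
    (hγ : ∀ q : Fin m → ℚ, (∑ j, (q j : ℝ) * γ j) = 0 → q = 0)
    (A : Matrix (Fin n → Fin 2) (Fin n → Fin 2) ℂ)
    (hAu : ⁅A, ∑ j, (γ j : ℂ) • b j⁆ = 0) :
    (∀ j, ⁅A, b j⁆ = 0) ∧ ∀ P ∈ multClosure m b, ⁅A, P⁆ = 0 := by
  classical
  have hsq : ∀ j, b j * b j = 1 := fun j => by
    obtain ⟨f, hf⟩ := hPauli j; rw [hf]; exact pauliString_mul_self n f
  have hbb : ∀ i j, b i * b j = b j * b i := fun i j => by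
    have h := hcomm i j; rwa [Ring.lie_def, sub_eq_zero] at h
  set S := Algebra.adjoin ℂ (Set.range b) with hSdef
  have hScomm := adjoin_comm b hbb
  letI : CommRing S := { (inferInstance : Ring S) with
    mul_comm := fun a c => Subtype.ext (hScomm a.1 a.2 c.1 c.2) }
  set b' : Fin m → S := fun j => ⟨b j, Algebra.subset_adjoin ⟨j, rfl⟩⟩ with hb'
  have hsq' : ∀ j, b' j * b' j = 1 := fun j => Subtype.ext (hsq j)
  set sg : Bool → ℂ := fun s => if s then 1 else -1 with hsg
  have hsg_sq : ∀ s, sg s * sg s = 1 := by intro s; cases s <;> simp [hsg]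
  set c : Fin m → Bool → S := fun j s => (2⁻¹ : ℂ) • (1 + sg s • b' j) with hc
  set P : (Fin m → Bool) → S := fun x => ∏ j, c j (x j) with hP
  -- sum of projectors is 1
  have hPsum : ∑ x : Fin m → Bool, P x = 1 := by
    rw [hP]
    rw [← Fintype.piFinset_univ, ← Finset.prod_univ_sum]
    refine Finset.prod_eq_one fun j _ => ?_
    rw [Fintype.sum_bool]
    have e1 : sg true = 1 := by simp [hsg]
    have e2 : sg false = -1 := by simp [hsg]
    simp only [hc, e1, e2, one_smul]
    rw [← smul_add]
    have h2 : ((1 : S) + b' j) + (1 + (-1 : ℂ) • b' j) = (2 : ℂ) • (1 : S) := by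
      rw [neg_one_smul, two_smul]; ring
    rw [h2, smul_smul]; norm_num
  have hbc : ∀ j s, b' j * c j s = sg s • c j s := by
    intro j s
    simp only [hc]
    rw [mul_smul_comm, smul_comm]
    congr 1
    rw [mul_add, mul_one, mul_smul_comm, hsq', smul_add, smul_smul, hsg_sq, one_smul]
    exact add_comm _ _
  have hbP : ∀ j x, b' j * P x = sg (x j) • P x := by
    intro j x
    rw [hP]
    simp only
    rw [← Finset.mul_prod_erase Finset.univ (fun i => c i (x i)) (Finset.mem_univ j),
      ← mul_assoc, hbc, smul_mul_assoc,
      Finset.mul_prod_erase Finset.univ (fun i => c i (x i)) (Finset.mem_univ j)]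
  -- eigenvalues
  set lam : (Fin m → Bool) → ℝ := fun x => ∑ j, γ j * (if x j then 1 else -1) with hlam
  have hcast : ∀ x, ((lam x : ℝ) : ℂ) = ∑ j, (γ j : ℂ) * sg (x j) := by
    intro x
    rw [hlam]
    push_cast
    refine Finset.sum_congr rfl fun j _ => ?_
    cases hx : x j <;> simp [hsg]
  have huP : ∀ x, (∑ j, (γ j : ℂ) • b' j) * P x = ((lam x : ℝ) : ℂ) • P x := by
    intro x
    rw [Finset.sum_mul]
    simp_rw [smul_mul_assoc, hbP, smul_smul]
    rw [← Finset.sum_smul, hcast]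
  -- move everything to the matrix level
  set u : Matrix (Fin n → Fin 2) (Fin n → Fin 2) ℂ := ∑ j, (γ j : ℂ) • b j with hu
  have hcoe_sum : ∀ (f : (Fin m → Bool) → S),
      ((∑ x, f x : S) : Matrix (Fin n → Fin 2) (Fin n → Fin 2) ℂ) = ∑ x, (f x : Matrix _ _ ℂ) :=
    fun f => by exact_mod_cast rfl
  have hPmsum : ∑ x : Fin m → Bool, (P x : Matrix (Fin n → Fin 2) (Fin n → Fin 2) ℂ) = 1 := by
    have h := congrArg (Subtype.val) hPsum
    rw [hcoe_sum] at h
    exact h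
  have hbPm : ∀ j x, b j * (P x : Matrix _ _ ℂ) = sg (x j) • (P x : Matrix _ _ ℂ) := by
    intro j x
    have h := congrArg (Subtype.val) (hbP j x)
    exact h
  have hPmb : ∀ j x, (P x : Matrix _ _ ℂ) * b j = sg (x j) • (P x : Matrix _ _ ℂ) := by
    intro j x
    have h := congrArg (Subtype.val) ((mul_comm (b' j) (P x)) ▸ hbP j x)
    exact h
  have hu' : ((∑ j, (γ j : ℂ) • b' j : S) : Matrix (Fin n → Fin 2) (Fin n → Fin 2) ℂ) = u := by
    rw [hu, AddSubmonoidClass.coe_finset_sum]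
    exact Finset.sum_congr rfl fun j _ => rfl
  have huPm : ∀ x, u * (P x : Matrix _ _ ℂ) = ((lam x : ℝ) : ℂ) • (P x : Matrix _ _ ℂ) := by
    intro x
    have h := congrArg (Subtype.val) (huP x)
    rw [← hu']
    exact_mod_cast h
  have hPmu : ∀ x, (P x : Matrix _ _ ℂ) * u = ((lam x : ℝ) : ℂ) • (P x : Matrix _ _ ℂ) := by
    intro x
    have h := congrArg (Subtype.val) ((mul_comm (∑ j, (γ j : ℂ) • b' j) (P x)) ▸ huP x)
    rw [← hu']
    exact_mod_cast h
  have hAu' : A * u = u * A := by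
    have h := hAu; rw [Ring.lie_def, sub_eq_zero] at h; exact h
  -- distinct sign patterns give distinct eigenvalues
  have hlamne : ∀ x y : Fin m → Bool, x ≠ y → lam x ≠ lam y := by
    intro x y hxy he
    set q : Fin m → ℚ := fun j => (if x j then 1 else -1) - (if y j then 1 else -1) with hq
    have hs : ∑ j, (q j : ℝ) * γ j = 0 := by
      have h : ∑ j, (q j : ℝ) * γ j = lam x - lam y := by
        rw [hlam, ← Finset.sum_sub_distrib]
        refine Finset.sum_congr rfl fun j _ => ?_
        simp only [hq]
        push_cast
        cases hxj : x j <;> cases hyj : y j <;> norm_num <;> ring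
      rw [h, he, sub_self]
    have hq0 := hγ q hs
    obtain ⟨j, hj⟩ : ∃ j, x j ≠ y j := by
      by_contra hc; push_neg at hc; exact hxy (funext hc)
    have hqj := congrFun hq0 j
    simp only [hq, Pi.zero_apply] at hqj
    cases hxj : x j <;> cases hyj : y j <;>
      rw [hxj, hyj] at hqj hj <;> (revert hj hqj; norm_num)
  -- off-diagonal blocks vanish
  have hdiag : ∀ x y : Fin m → Bool, x ≠ y →
      (P x : Matrix _ _ ℂ) * A * (P y : Matrix _ _ ℂ) = 0 := by
    intro x y hxy
    have h1 : ((lam x : ℝ) : ℂ) • ((P x : Matrix _ _ ℂ) * A * (P y : Matrix _ _ ℂ))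
        = ((lam y : ℝ) : ℂ) • ((P x : Matrix _ _ ℂ) * A * (P y : Matrix _ _ ℂ)) := by
      calc ((lam x : ℝ) : ℂ) • ((P x : Matrix _ _ ℂ) * A * (P y : Matrix _ _ ℂ))
          = ((P x : Matrix _ _ ℂ) * u) * A * (P y : Matrix _ _ ℂ) := by
            rw [hPmu, smul_mul_assoc, smul_mul_assoc]
        _ = (P x : Matrix _ _ ℂ) * (u * A) * (P y : Matrix _ _ ℂ) := by
            noncomm_ring
        _ = (P x : Matrix _ _ ℂ) * (A * u) * (P y : Matrix _ _ ℂ) := by rw [hAu']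
        _ = ((P x : Matrix _ _ ℂ) * A) * (u * (P y : Matrix _ _ ℂ)) := by
            noncomm_ring
        _ = ((lam y : ℝ) : ℂ) • ((P x : Matrix _ _ ℂ) * A * (P y : Matrix _ _ ℂ)) := by
            rw [huPm, mul_smul_comm, mul_assoc]
    have h2 : (((lam x - lam y : ℝ)) : ℂ) • ((P x : Matrix _ _ ℂ) * A * (P y : Matrix _ _ ℂ)) = 0 := by
      push_cast
      rw [sub_smul, h1, sub_self]
    rcases smul_eq_zero.mp h2 with h | h
    · exfalso
      have hz : lam x - lam y = 0 := by exact_mod_cast h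
      exact hlamne x y hxy (by linarith)
    · exact h
  -- the key commutation
  have key : ∀ j, A * b j = b j * A := by
    intro j
    have hA1 : A = ∑ x : Fin m → Bool, (P x : Matrix _ _ ℂ) * A * (P x : Matrix _ _ ℂ) := by
      calc A = (∑ x, (P x : Matrix _ _ ℂ)) * A * (∑ y, (P y : Matrix _ _ ℂ)) := by
            rw [hPmsum, one_mul, mul_one]
        _ = ∑ x, ∑ y, (P x : Matrix _ _ ℂ) * A * (P y : Matrix _ _ ℂ) := by
            rw [Finset.sum_mul, Finset.sum_mul]
            exact Finset.sum_congr rfl fun x _ => by rw [Finset.mul_sum]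
        _ = ∑ x, (P x : Matrix _ _ ℂ) * A * (P x : Matrix _ _ ℂ) := by
            refine Finset.sum_congr rfl fun x _ => ?_
            rw [Finset.sum_eq_single x (fun y _ hyx => hdiag x y (Ne.symm hyx))
              (fun h => absurd (Finset.mem_univ x) h)]
    calc A * b j = (∑ x : Fin m → Bool, (P x : Matrix _ _ ℂ) * A * (P x : Matrix _ _ ℂ)) * b j := by
          rw [← hA1]
      _ = ∑ x : Fin m → Bool, sg (x j) • ((P x : Matrix _ _ ℂ) * A * (P x : Matrix _ _ ℂ)) := by
          rw [Finset.sum_mul]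
          refine Finset.sum_congr rfl fun x _ => ?_
          rw [mul_assoc, hPmb, mul_smul_comm]
      _ = ∑ x : Fin m → Bool, b j * ((P x : Matrix _ _ ℂ) * A * (P x : Matrix _ _ ℂ)) := by
          refine Finset.sum_congr rfl fun x _ => ?_
          rw [← mul_assoc, ← mul_assoc, hbPm, smul_mul_assoc, smul_mul_assoc]
      _ = b j * A := by rw [← Finset.mul_sum, ← hA1]
  refine ⟨fun j => by rw [Ring.lie_def, key, sub_self], ?_⟩
  intro Q hQ
  rw [Ring.lie_def, sub_eq_zero]
  simp only [multClosure] at hQ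
  induction hQ using Submodule.span_induction with
  | mem x hx =>
      obtain ⟨s, rfl⟩ := hx
      refine (Commute.list_prod_right _ A fun y hy => ?_).eq
      rw [List.mem_map] at hy
      obtain ⟨j, _, rfl⟩ := hy
      exact key j
  | zero => simp
  | add x y hx hy ihx ihy => rw [mul_add, add_mul, ihx, ihy]
  | smul a x hx ih => rw [mul_smul_comm, smul_mul_assoc, ih]
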